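/- Let k ≥ 1, let L be the first-order language consisting of a single unary function symbol f, and let M_k be the L-structure with underlying set ℕ × ZMod k in which f is interpreted as the map (i,j) ↦ (i, j+1). Then the complete first-order theory of M_k is κ-categorical for every infinite cardinal κ (i.e., M_k is totally categorical). -/

import Mathlib

open FirstOrder FirstOrder.Language

universe w

/-- The first-order language consisting of a single unary function symbol `f`. -/
def unaryLang : FirstOrder.Language :=
  ⟨fun n => match n with | 1 => PUnit | _ => Empty, fun _ => Empty⟩

/-- The `unaryLang`-structure on `ℕ × ZMod k` in which the unary function symbol
is interpreted as `(i, j) ↦ (i, j + 1)`: the disjoint union of `ω`-many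
`f`-cycles of length `k`. -/
instance cycleStr (k : ℕ) : unaryLang.Structure (ℕ × ZMod k) where
  funMap {n} f x :=
    match n, f, x with
    | 1, _, x => ((x 0).1, (x 0).2 + 1)
  RelMap {_} r _ := r.elim

/-!
Every element of `M_k`, hence (by the sentences `∀ x, fᵏ x = x` and `∀ x, fᵈ x ≠ x`,
`0 < d < k`) every element of every model of its theory, has minimal period `k` under `f`.
Then `j ↦ f^[j]` is a free action of `ZMod k`, so a model is `Q × ZMod k` with `f` acting on
the second factor, `Q` being the set of orbits. If the model has infinite cardinality `κ`, so
does `Q`, and a bijection between the orbit sets of two such models yields an isomorphism.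
-/
open Function Cardinal

universe u

theorem Cardinal.eq_of_mul_natCast_eq {c κ : Cardinal} {n : ℕ} (hn : n ≠ 0)
    (hκ : ℵ₀ ≤ κ) (h : c * n = κ) : c = κ := by
  have hn_lt : (n : Cardinal) < ℵ₀ := natCast_lt_aleph0
  have hc : ℵ₀ ≤ c := by
    rw [← h, aleph0_le_mul_iff] at hκ
    exact hκ.2.2.resolve_right hn_lt.not_ge
  rw [← h, mul_eq_left hc (hn_lt.le.trans hc) (Nat.cast_ne_zero.2 hn)]

namespace Function

variable {α : Type u} {f : α → α} {k : ℕ}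

theorem minimalPeriod_eq_of_forall_lt {x : α} (hk : 0 < k) (hper : IsPeriodicPt f k x)
    (hmin : ∀ d, 0 < d → d < k → ¬IsPeriodicPt f d x) : minimalPeriod f x = k :=
  (hper.minimalPeriod_le hk).antisymm <| not_lt.1 fun hlt =>
    hmin _ (hper.minimalPeriod_pos hk) hlt (isPeriodicPt_minimalPeriod f x)

@[reducible]
def zmodAddAction [NeZero k] (hf : ∀ x, IsPeriodicPt f k x) : AddAction (ZMod k) α where
  vadd j x := f^[j.val] x
  zero_vadd x := by
    change f^[(0 : ZMod k).val] x = x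
    rw [ZMod.val_zero, iterate_zero_apply]
  add_vadd i j x := by
    change f^[(i + j).val] x = f^[i.val] (f^[j.val] x)
    rw [ZMod.val_add, (hf x).iterate_mod_apply, iterate_add_apply]

theorem exists_prod_zmod_equiv_of_minimalPeriod_eq (hk : 0 < k)
    (hf : ∀ x, minimalPeriod f x = k) :
    ∃ (Q : Type u) (e : Q × ZMod k ≃ α), ∀ q j, e (q, j + 1) = f (e (q, j)) := by
  have : NeZero k := ⟨hk.ne'⟩
  have hper (x : α) : IsPeriodicPt f k x := hf x ▸ isPeriodicPt_minimalPeriod f x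
  let := zmodAddAction hper
  have hfree (x : α) : AddAction.stabilizer (ZMod k) x = ⊥ := by
    refine (AddSubgroup.eq_bot_iff_forall _).2 fun j hj => ZMod.val_injective k ?_
    rw [ZMod.val_zero]
    exact IsPeriodicPt.eq_zero_of_lt_minimalPeriod hj ((hf x).symm ▸ j.val_lt)
  refine ⟨_, (AddAction.selfEquivOrbitsQuotientProd hfree).symm, fun q j => ?_⟩
  change (j + 1) +ᵥ q.out = f (j +ᵥ q.out)
  rw [add_comm, add_vadd]
  change f^[(1 : ZMod k).val] _ = _
  rw [ZMod.val_one_eq_one_mod, (hper _).iterate_mod_apply, iterate_one]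

theorem exists_equiv_semiconj_of_minimalPeriod_eq {β : Type u} {g : β → β} (hk : 0 < k)
    (hf : ∀ x, minimalPeriod f x = k) (hg : ∀ y, minimalPeriod g y = k) (hα : ℵ₀ ≤ #α)
    (hcard : #α = #β) : ∃ E : α ≃ β, Semiconj E f g := by
  have : NeZero k := ⟨hk.ne'⟩
  obtain ⟨P, eα, heα⟩ := exists_prod_zmod_equiv_of_minimalPeriod_eq hk hf
  obtain ⟨Q, eβ, heβ⟩ := exists_prod_zmod_equiv_of_minimalPeriod_eq hk hg
  have card_orbits {γ R : Type u} (e : R × ZMod k ≃ γ) (hγ : ℵ₀ ≤ #γ) : #R = #γ := by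
    refine eq_of_mul_natCast_eq hk.ne' hγ ?_
    rw [← mk_congr e, mk_prod, mk_fintype (ZMod k), ZMod.card, lift_id', lift_natCast]
  obtain ⟨σ⟩ := Cardinal.eq.1 ((card_orbits eα hα).trans
    (hcard.trans (card_orbits eβ (hcard ▸ hα)).symm))
  refine ⟨eα.symm.trans ((σ.prodCongr (Equiv.refl _)).trans eβ), fun x => ?_⟩
  obtain ⟨⟨q, j⟩, rfl⟩ := eα.surjective x
  simp [← heα, heβ]

end Function

namespace unaryLang

variable {M N : Type*} [unaryLang.Structure M] [unaryLang.Structure N]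

def fn : unaryLang.Functions 1 := PUnit.unit

def fnMap (M : Type*) [unaryLang.Structure M] (x : M) : M := Structure.funMap fn ![x]

theorem funMap_eq_fnMap (s : unaryLang.Functions 1) (x : Fin 1 → M) :
    Structure.funMap s x = fnMap M (x 0) :=
  congrArg _ (funext fun i => by rw [Subsingleton.elim i 0]; rfl)

def equivOfSemiconj (E : M ≃ N) (hE : Semiconj E (fnMap M) (fnMap N)) : M ≃[unaryLang] N where
  toEquiv := E
  map_fun' {n} s x := match n, s with
    | 1, s => by rw [funMap_eq_fnMap, funMap_eq_fnMap]; exact hE (x 0)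
  map_rel' r := r.elim

def iterateTerm {α : Type*} : ℕ → unaryLang.Term α → unaryLang.Term α
  | 0, t => t
  | n + 1, t => fn.apply₁ (iterateTerm n t)

@[simp]
theorem realize_iterateTerm {α : Type*} (n : ℕ) (t : unaryLang.Term α) (v : α → M) :
    (iterateTerm n t).realize v = (fnMap M)^[n] (t.realize v) := by
  induction n with
  | zero => rfl
  | succ n ih =>
    rw [iterateTerm, Term.realize_functions_apply₁, ih, iterate_succ_apply']
    rfl

def isPeriodicPtFormula (n : ℕ) : unaryLang.BoundedFormula Empty 1 :=
  (iterateTerm n &0).bdEqual &0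

theorem realize_all_isPeriodicPtFormula {n : ℕ} :
    M ⊨ ∀' isPeriodicPtFormula n ↔ ∀ x, IsPeriodicPt (fnMap M) n x := by
  simp [isPeriodicPtFormula, Sentence.Realize, Formula.Realize, IsPeriodicPt, IsFixedPt, Fin.snoc]

theorem realize_all_not_isPeriodicPtFormula {n : ℕ} :
    M ⊨ ∀' ∼(isPeriodicPtFormula n) ↔ ∀ x, ¬IsPeriodicPt (fnMap M) n x := by
  simp [isPeriodicPtFormula, Sentence.Realize, Formula.Realize, IsPeriodicPt, IsFixedPt, Fin.snoc]

theorem minimalPeriod_eq_of_model_completeTheory [N ⊨ unaryLang.completeTheory M] {k : ℕ}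
    (hk : 0 < k) (hM : ∀ x : M, minimalPeriod (fnMap M) x = k) (y : N) :
    minimalPeriod (fnMap N) y = k := by
  have transfer (φ : unaryLang.Sentence) : M ⊨ φ → N ⊨ φ :=
    (realize_iff_of_model_completeTheory M N φ).2
  refine minimalPeriod_eq_of_forall_lt hk ?_ fun d hd hdk => ?_
  · refine realize_all_isPeriodicPtFormula.1
      (transfer _ (realize_all_isPeriodicPtFormula.2 fun x => ?_)) y
    exact hM x ▸ isPeriodicPt_minimalPeriod _ x
  · refine realize_all_not_isPeriodicPtFormula.1
      (transfer _ (realize_all_not_isPeriodicPtFormula.2 fun x hx => ?_)) y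
    exact hd.ne' (hx.eq_zero_of_lt_minimalPeriod (hM x ▸ hdk))

theorem fnMap_cycleStr_iterate (k n : ℕ) (x : ℕ × ZMod k) :
    (fnMap (ℕ × ZMod k))^[n] x = (x.1, x.2 + n) := by
  induction n with
  | zero => simp
  | succ n ih =>
    rw [iterate_succ_apply', ih, Nat.cast_succ, ← add_assoc]
    rfl

theorem minimalPeriod_fnMap_cycleStr (k : ℕ) (x : ℕ × ZMod k) :
    minimalPeriod (fnMap (ℕ × ZMod k)) x = k := by
  have isPeriodicPt_iff (n : ℕ) : IsPeriodicPt (fnMap _) n x ↔ k ∣ n := by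
    simp [IsPeriodicPt, IsFixedPt, fnMap_cycleStr_iterate, Prod.ext_iff, ZMod.natCast_eq_zero_iff]
  exact Nat.dvd_antisymm (isPeriodicPt_iff_minimalPeriod_dvd.1 ((isPeriodicPt_iff k).2 dvd_rfl))
    ((isPeriodicPt_iff _).1 (isPeriodicPt_minimalPeriod _ x))

end unaryLang

/-- The complete first-order theory of the disjoint union of `ω`-many
`f`-cycles of length `k ≥ 1` is `κ`-categorical for every infinite cardinal
`κ`; i.e. this structure is totally categorical. -/
theorem cycleStructure_totallyCategorical (k : ℕ) (hk : 1 ≤ k)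
    (κ : Cardinal.{w}) (hκ : Cardinal.aleph0 ≤ κ) :
    κ.Categorical (unaryLang.completeTheory (ℕ × ZMod k)) := by
  intro M N hM hN
  have hper (P : (unaryLang.completeTheory (ℕ × ZMod k)).ModelType) (x : P) :
      minimalPeriod (unaryLang.fnMap P) x = k :=
    unaryLang.minimalPeriod_eq_of_model_completeTheory hk
      (unaryLang.minimalPeriod_fnMap_cycleStr k) x
  obtain ⟨E, hE⟩ := exists_equiv_semiconj_of_minimalPeriod_eq hk (hper M) (hper N) (hM ▸ hκ)
    (hM.trans hN.symm)
  exact ⟨unaryLang.equivOfSemiconj E hE⟩
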